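/- arXiv:2310.05735 — 4 statements merged into one kernel-verified Lean document; each statement's English description precedes it below -/
import Mathlib

section
/- Any non-trivial left-orderable quandle is infinite; in particular, finite non-trivial quandles are not left-orderable. -/
/-- A quandle: a set with a binary operation `act` (written `x * y`), a dual operation
`inv` (written `x *⁻¹ y`), satisfying idempotency, right-invertibility
(`(x*y) *⁻¹ y = (x *⁻¹ y) * y = x`) and self-distributivity. -/
structure Quandle' (Q : Type u) where
  act : Q → Q → Q
  inv : Q → Q → Q
  idem : ∀ x : Q, act x x = x
  act_inv : ∀ x y : Q, inv (act x y) y = x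
  inv_act : ∀ x y : Q, act (inv x y) y = x
  distrib : ∀ x y z : Q, act (act x y) z = act (act x z) (act y z)

/-- A left-order on a quandle: a strict linear order `r` such that `x < y` implies
`z * x < z * y` for all `z`. -/
def Quandle'.IsLeftOrder {Q : Type u} (q : Quandle' Q) (r : Q → Q → Prop) : Prop :=
  IsStrictTotalOrder Q r ∧ ∀ x y z : Q, r x y → r (q.act z x) (q.act z y)

/-- An involutory quandle: `(x*y)*y = x` for all `x, y`. -/
def Quandle'.Involutory {Q : Type u} (q : Quandle' Q) : Prop :=
  ∀ x y : Q, q.act (q.act x y) y = x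

namespace Quandle'

variable {Q : Type u} (q : Quandle' Q)

/-- `x = (y * x) *⁻¹ x = x *⁻¹ x` for all `y`, so every element equals `x *⁻¹ x`. -/
theorem subsingleton_of_act_eq_right (h : ∀ z x : Q, q.act z x = x) : Subsingleton Q :=
  ⟨fun x y => by rw [← q.act_inv x x, ← q.act_inv y x, h x x, h y x]⟩

theorem act_eq_right_of_isLeftOrder [Finite Q] {r : Q → Q → Prop} (hr : q.IsLeftOrder r)
    (z x : Q) : q.act z x = x := by
  obtain ⟨hsto, hmono⟩ := hr
  let : LinearOrder Q := @linearOrderOfSTO Q r hsto (Classical.decRel r)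
  exact StrictMono.apply_eq (f := q.act z) fun a b hab => hmono a b z hab

end Quandle'

/-- any non-trivial left-orderable quandle is infinite; in particular a
finite non-trivial quandle is not left-orderable. -/
theorem stmt_8 {Q : Type u} (q : Quandle' Q)
    (hnontriv : ¬ ∀ x y : Q, q.act x y = x)
    (horder : ∃ r : Q → Q → Prop, q.IsLeftOrder r) :
    Infinite Q := by
  by_contra hfin
  have : Finite Q := not_infinite_iff_finite.mp hfin
  obtain ⟨r, hr⟩ := horder
  have := q.subsingleton_of_act_eq_right (q.act_eq_right_of_isLeftOrder hr)
  exact hnontriv fun x y => Subsingleton.elim _ _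
end

section
/- Let < be a left-order on an involutory quandle Q and let ⋄ ∈ {=, <, >}. Then x ⋄ y if and only if y^((xy)^i) ⋄ x^((xy)^(i+1)) for every integer i ≥ 0, where exponential notation denotes iterated left-associative application of the quandle operation. -/
/-- The chain `z 0 = x`, `z 1 = y`, `z (n+2) = z n * z (n+1)`. -/
private def ch {Q : Type u} (m : Q → Q → Q) (x y : Q) : ℕ → Q
  | 0 => x
  | 1 => y
  | (n+2) => m (ch m x y n) (ch m x y (n+1))

private theorem ch_eq {Q : Type u} (m : Q → Q → Q) (x y : Q)
    (hidem : ∀ a, m a a = a)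
    (hdist : ∀ a b c, m (m a b) c = m (m a c) (m b c)) :
    ∀ n, ch m x y (n+2) = m (m (ch m x y n) x) y := by
  have key : ∀ n, ch m x y (n+2) = m (m (ch m x y n) x) y ∧
      ch m x y (n+3) = m (m (ch m x y (n+1)) x) y := by
    intro n
    induction n with
    | zero =>
        constructor
        · show m x y = m (m x x) y
          rw [hidem]
        · show m y (m x y) = m (m y x) y
          rw [hdist, hidem]
    | succ k ihk =>
        refine ⟨ihk.2, ?_⟩
        show m (ch m x y (k+2)) (ch m x y (k+3)) = m (m (ch m x y (k+2)) x) y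
        calc m (ch m x y (k+2)) (ch m x y (k+3))
            = m (m (m (ch m x y k) x) y) (m (m (ch m x y (k+1)) x) y) := by
              rw [← ihk.1, ← ihk.2]
          _ = m (m (m (ch m x y k) x) (m (ch m x y (k+1)) x)) y :=
              (hdist (m (ch m x y k) x) (m (ch m x y (k+1)) x) y).symm
          _ = m (m (m (ch m x y k) (ch m x y (k+1))) x) y := by
              rw [← hdist (ch m x y k) (ch m x y (k+1)) x]
          _ = m (m (ch m x y (k+2)) x) y := rfl
  exact fun n => (key n).1

/-- Lemma 2: let `<` (i.e. `r`) be a left-order on an involutory quandle and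
`⋄` (i.e. `d`) one of `=`, `<`, `>`. Then `x ⋄ y` iff `y^((xy)^i) ⋄ x^((xy)^(i+1))` for
every integer `i ≥ 0`. Here acting by the word `(xy)^i` is the `i`-th iterate of
`a ↦ (a*x)*y`. -/
theorem stmt_10 {Q : Type u} (q : Quandle' Q) (hinv : q.Involutory)
    (r : Q → Q → Prop) (hr : q.IsLeftOrder r)
    (d : Q → Q → Prop) (hd : d = (fun a b : Q => a = b) ∨ d = r ∨ d = flip r)
    (x y : Q) :
    d x y ↔ ∀ i : ℕ,
      d ((fun a : Q => q.act (q.act a x) y)^[i] y)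
        ((fun a : Q => q.act (q.act a x) y)^[i + 1] x) := by
  set m := q.act with hm
  have hidem : ∀ a, m a a = a := q.idem
  have hdist : ∀ a b c, m (m a b) c = m (m a c) (m b c) := q.distrib
  have hin : ∀ a b, m (m a b) b = a := hinv
  have H := hr.1
  have mono : ∀ (z a b : Q), r a b → r (m z a) (m z b) := fun z a b h => hr.2 a b z h
  have htri : ∀ a b : Q, r a b ∨ a = b ∨ r b a := fun a b => by
    by_cases h1 : r a b
    · exact Or.inl h1
    by_cases h2 : r b a
    · exact Or.inr (Or.inr h2)
    exact Or.inr (Or.inl (H.trichotomous a b h1 h2))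
  have hirr : ∀ a : Q, ¬ r a a := fun a => H.toIsStrictOrder.toIrrefl.irrefl a
  have htrans : ∀ a b c : Q, r a b → r b c → r a c := fun a b c => H.toIsTrans.trans a b c
  -- auxiliary rewrite : (b*a)*b = b*(a*b)
  have haux : ∀ a b : Q, m (m b a) b = m b (m a b) := by
    intro a b
    rw [hdist, hidem]
  -- Lemma A : r a b → r b (a*b)
  have lemA : ∀ a b : Q, r a b → r b (m a b) := by
    intro a b hab
    have h1 : r (m (m b a) a) (m (m b a) b) := mono _ _ _ hab
    rw [hin, haux] at h1
    -- h1 : r b (m b (m a b))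
    rcases htri (m a b) b with h | h | h
    · exact absurd (htrans _ _ _ h1 (by simpa [hidem] using mono b _ _ h)) (hirr b)
    · rw [h, hidem] at h1; exact absurd h1 (hirr b)
    · exact h
  -- Lemma B : r b a → r (a*b) b
  have lemB : ∀ a b : Q, r b a → r (m a b) b := by
    intro a b hba
    have h1 : r (m (m b a) b) (m (m b a) a) := mono _ _ _ hba
    rw [hin, haux] at h1
    -- h1 : r (m b (m a b)) b
    rcases htri (m a b) b with h | h | h
    · exact h
    · rw [h, hidem] at h1; exact absurd h1 (hirr b)
    · exact absurd (htrans _ _ _ (by simpa [hidem] using mono b _ _ h) h1) (hirr b)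
  -- the step lemma for d
  have hstep : ∀ a b : Q, d a b → d b (m a b) := by
    intro a b hab
    rcases hd with rfl | rfl | rfl
    · have hab' : a = b := hab
      show b = m a b
      rw [← hab', hidem]
    · exact lemA a b hab
    · exact lemB a b hab
  -- iterate vs chain
  set f : Q → Q := fun a : Q => q.act (q.act a x) y with hf
  have hc2 := ch_eq m x y hidem hdist
  have hfc : ∀ a : Q, f a = m (m a x) y := fun a => rfl
  have hiter : ∀ i : ℕ, f^[i] y = ch m x y (2*i+1) ∧ f^[i+1] x = ch m x y (2*i+2) := by
    intro i
    induction i with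
    | zero =>
        constructor
        · rfl
        · show f x = ch m x y 2
          rw [hfc]
          show m (m x x) y = m x y
          rw [hidem]
    | succ k ihk =>
        constructor
        · rw [Function.iterate_succ_apply', ihk.1, hfc, ← hc2 (2*k+1)]
          congr 1
        · rw [Function.iterate_succ_apply', ihk.2, hfc, ← hc2 (2*k+2)]
          congr 1
  -- forward : chain preserves d
  have hchain : d x y → ∀ n : ℕ, d (ch m x y n) (ch m x y (n+1)) := by
    intro hxy n
    induction n with
    | zero => exact hxy
    | succ k ihk => exact hstep _ _ ihk
  constructor
  · intro hxy i
    rw [(hiter i).1, (hiter i).2]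
    exact hchain hxy (2*i+1)
  · intro h
    have h0 := h 0
    rw [(hiter 0).1, (hiter 0).2] at h0
    -- h0 : d (ch 1) (ch 2), ch 1 = y, ch 2 = m x y
    have h0' : d y (m x y) := h0
    rcases htri x y with hlt | heq | hgt
    · -- x < y; then r y (m x y)
      rcases hd with rfl | rfl | rfl
      · have ha := lemA x y hlt
        rw [← (show y = m x y from h0')] at ha
        exact absurd ha (hirr y)
      · exact hlt
      · exact absurd (htrans _ _ _ (lemA x y hlt) h0') (hirr y)
    · rcases hd with rfl | rfl | rfl
      · exact heq
      · have : m x y = y := by rw [heq, hidem]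
        rw [this] at h0'; exact absurd h0' (hirr y)
      · have : m x y = y := by rw [heq, hidem]
        rw [this] at h0'; exact absurd h0' (hirr y)
    · -- y < x; then r (m x y) y
      rcases hd with rfl | rfl | rfl
      · have hb := lemB x y hgt
        rw [← (show y = m x y from h0')] at hb
        exact absurd hb (hirr y)
      · exact absurd (htrans _ _ _ h0' (lemB x y hgt)) (hirr y)
      · exact hgt
end

section
/- Let Q be a left-orderable involutory quandle and let (x_i)_{i≥0} be defined recursively by x_{i+2} = x_i * x_{i+1}. Then (x_i) is monotonic with respect to every left-order on Q: for each left-order <, there is a single symbol ⋄ ∈ {=, <, >} with x_i ⋄ x_{i+1} for all i ≥ 0. -/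
/-- Lemma 3: let `Q` be a left-orderable involutory quandle and
`(x_i)_{i ≥ 0}` a sequence with `x_{i+2} = x_i * x_{i+1}`. Then `(x_i)` is monotonic with
respect to every left-order: for each left-order `<` (i.e. `r`) there is a single symbol
`⋄ ∈ {=, <, >}` (i.e. `d`) with `x_i ⋄ x_{i+1}` for all `i`. -/
theorem stmt_12 {Q : Type u} (q : Quandle' Q) (hinv : q.Involutory)
    (horder : ∃ r : Q → Q → Prop, q.IsLeftOrder r)
    (s : ℕ → Q) (hs : ∀ i : ℕ, s (i + 2) = q.act (s i) (s (i + 1))) :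
    ∀ r : Q → Q → Prop, q.IsLeftOrder r →
      ∃ d : Q → Q → Prop, (d = (fun a b : Q => a = b) ∨ d = r ∨ d = flip r) ∧
        ∀ i : ℕ, d (s i) (s (i + 1)) := by

  intro r hr
  obtain ⟨hsto, hmono⟩ := hr
  have htri : ∀ a b : Q, r a b ∨ a = b ∨ r b a := fun a b => by
    by_cases h1 : r a b
    · exact Or.inl h1
    by_cases h2 : r b a
    · exact Or.inr (Or.inr h2)
    exact Or.inr (Or.inl (hsto.trichotomous a b h1 h2))
  have hirr : ∀ a : Q, ¬ r a a := hsto.irrefl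
  have htrans : ∀ a b c : Q, r a b → r b c → r a c := fun a b c => hsto.trans a b c
  -- key lemma: a < b implies b < a*b
  have key : ∀ a b : Q, r a b → r b (q.act a b) := by
    intro a b hab
    have h1 : r a (q.act a b) := by
      have := hmono a b a hab
      rwa [q.idem] at this
    rcases htri b (q.act a b) with h | h | h
    · exact h
    · exfalso
      have : q.act (q.act a b) b = b := by rw [← h, q.idem]
      rw [hinv] at this
      rw [this] at hab
      exact hirr b hab
    · exfalso
      have h2 := hmono (q.act a b) b (q.act a b) h
      rw [q.idem, hinv] at h2
      exact hirr a (htrans _ _ _ h1 h2)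
  -- key lemma 2: b < a implies a*b < b
  have key2 : ∀ a b : Q, r b a → r (q.act a b) b := by
    intro a b hba
    have h1 : r (q.act a b) a := by
      have := hmono b a a hba
      rwa [q.idem] at this
    rcases htri (q.act a b) b with h | h | h
    · exact h
    · exfalso
      have : q.act (q.act a b) b = b := by rw [h, q.idem]
      rw [hinv] at this
      rw [this] at hba
      exact hirr b hba
    · exfalso
      have h2 := hmono b (q.act a b) (q.act a b) h
      rw [q.idem, hinv] at h2
      exact hirr a (htrans _ _ _ h2 h1)
  rcases htri (s 0) (s 1) with h | h | h
  · refine ⟨r, Or.inr (Or.inl rfl), ?_⟩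
    intro i
    induction i with
    | zero => exact h
    | succ n ih => rw [hs n]; exact key _ _ ih
  · refine ⟨(fun a b : Q => a = b), Or.inl rfl, ?_⟩
    intro i
    induction i with
    | zero => exact h
    | succ n ih => rw [hs n, ← ih, q.idem, ih]
  · refine ⟨flip r, Or.inr (Or.inr rfl), ?_⟩
    intro i
    induction i with
    | zero => exact h
    | succ n ih => rw [hs n]; exact key2 _ _ ih
end

section
/- For the sequence x_0 = x, x_1 = y, x_{i+2} = x_i * x_{i+1} in an involutory quandle, x_i = x^((xy)^(i/2)) if i is even and x_i = y^((xy)^((i-1)/2)) if i is odd. -/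
/-!
By self-distributivity `f a = (a * x) * y` is an endomorphism of `*`. By idempotency
`x₂ = (x₀ * x₀) * x₁ = f x₀` and `x₃ = x₁ * (x₀ * x₁) = (x₁ * x₀) * x₁ = f x₁`, and then inductively
`x_{i+4} = f x_i * f x_{i+1} = f x_{i+2}`. So `f` advances the sequence by two steps.
-/
theorem Function.eq_iterate_of_forall_add_two {α : Type*} {f : α → α} {s : ℕ → α}
    (hs : ∀ i, s (i + 2) = f (s i)) (k r : ℕ) : s (2 * k + r) = f^[k] (s r) := by
  induction k with
  | zero => simp
  | succ k ih =>
    rw [Function.iterate_succ_apply', ← ih, ← hs]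
    congr 1
    ring

namespace Quandle'

variable {Q : Type u} (q : Quandle' Q)

theorem semiconj₂_act_right (z : Q) : Function.Semiconj₂ (q.act · z) q.act q.act :=
  fun a b => q.distrib a b z

theorem semiconj₂_act_act_right (x y : Q) :
    Function.Semiconj₂ (fun a => q.act (q.act a x) y) q.act q.act :=
  (q.semiconj₂_act_right y).comp (q.semiconj₂_act_right x)

theorem add_two_eq_act_act_of_recurrence {s : ℕ → Q}
    (hs : ∀ i, s (i + 2) = q.act (s i) (s (i + 1))) :
    ∀ i, s (i + 2) = q.act (q.act (s i) (s 0)) (s 1)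
  | 0 => by rw [hs, q.idem]
  | 1 => by rw [hs, hs 0, q.distrib, q.idem]
  | i + 2 => by
    set f := fun a => q.act (q.act a (s 0)) (s 1)
    calc s (i + 2 + 2) = q.act (s (i + 2)) (s (i + 1 + 2)) := hs (i + 2)
      _ = q.act (f (s i)) (f (s (i + 1))) := by
        rw [add_two_eq_act_act_of_recurrence hs i, add_two_eq_act_act_of_recurrence hs (i + 1)]
      _ = f (s (i + 2)) := by
        rw [hs i]
        exact ((q.semiconj₂_act_act_right _ _).eq _ _).symm

end Quandle'

theorem stmt_13_general {Q : Type u} (q : Quandle' Q)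
    (x y : Q) (s : ℕ → Q) (h0 : s 0 = x) (h1 : s 1 = y)
    (hs : ∀ i : ℕ, s (i + 2) = q.act (s i) (s (i + 1))) :
    ∀ i : ℕ,
      (Even i → s i = (fun a : Q => q.act (q.act a x) y)^[i / 2] x) ∧
      (Odd i → s i = (fun a : Q => q.act (q.act a x) y)^[(i - 1) / 2] y) := by
  subst h0 h1
  have hstep := q.add_two_eq_act_act_of_recurrence hs
  intro i
  constructor
  · rintro ⟨k, rfl⟩
    rw [← two_mul, Nat.mul_div_cancel_left k two_pos]
    exact Function.eq_iterate_of_forall_add_two hstep k 0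
  · rintro ⟨k, rfl⟩
    rw [Nat.add_sub_cancel, Nat.mul_div_cancel_left k two_pos]
    exact Function.eq_iterate_of_forall_add_two hstep k 1

/-- for the sequence `x₀ = x`, `x₁ = y`, `x_{i+2} = x_i * x_{i+1}` in an
involutory quandle, `x_i = x^((xy)^(i/2))` if `i` is even and `x_i = y^((xy)^((i-1)/2))`
if `i` is odd, where acting by the word `(xy)^k` is the `k`-th iterate of `a ↦ (a*x)*y`. -/
theorem stmt_13 {Q : Type u} (q : Quandle' Q) (hinv : q.Involutory)
    (x y : Q) (s : ℕ → Q) (h0 : s 0 = x) (h1 : s 1 = y)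
    (hs : ∀ i : ℕ, s (i + 2) = q.act (s i) (s (i + 1))) :
    ∀ i : ℕ,
      (Even i → s i = (fun a : Q => q.act (q.act a x) y)^[i / 2] x) ∧
      (Odd i → s i = (fun a : Q => q.act (q.act a x) y)^[(i - 1) / 2] y) :=
  stmt_13_general q x y s h0 h1 hs
end
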